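/- Assume H(A), H(B), H(J), H(f), H(u₀) and (H_s), fix z ∈ V and g ∈ V*, and let V^h ⊆ V be a finite-dimensional subspace. Then the functional L(w) = ½⟨Aw,w⟩ + ⟨Bz − g, w⟩ + J(γz, γw) attains a unique global minimizer over V^h; equivalently, there is exactly one v^h ∈ V^h with 0 ∈ ∂(L|_{V^h})(v^h). Consequently, Problem P_opt^h has a unique solution. -/

import Mathlib

/-!
Write `ψ = J(γz, ·)`. Integrating the Clarke derivative of `ψ` along a segment (a mean value
inequality for the upper Dini derivative) and combining the relaxed monotonicity H(J)(c) with a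
Clarke subgradient `ξ ∈ ∂ψ(0)`, which exists by Hahn–Banach, gives
`ψ(u) ≥ ψ(0) + ξ(u) - m_{J1}‖u‖²`. Hence `L(w) ≥ ½(m_A - 2 m_{J1} c_γ²)‖w‖² - β‖w‖ + c`, so the
continuous function `L` attains its minimum on the finite-dimensional space `V^h`, and a minimizer
is a Clarke critical point. Adding `0 ≤ L⁰(v; v' - v)` and `0 ≤ L⁰(v'; v - v')` and estimating
`L⁰` by the derivative of the quadratic part plus `ψ⁰` gives `(m_A - m_{J1} c_γ²)‖v - v'‖² ≤ 0`,
so critical points, and hence minimizers, are unique. Problem P_opt^h is solved one step at a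
time, step `j` being such a problem with `z = (K^k v)_{j-1}`.
-/

open Filter MeasureTheory Set

noncomputable def clarkeDeriv {Y : Type*} [NormedAddCommGroup Y] [NormedSpace ℝ Y]
    (φ : Y → ℝ) (y z : Y) : ℝ :=
  Filter.limsup (fun p : Y × ℝ => (φ (p.1 + p.2 • z) - φ p.1) / p.2)
    ((nhds y) ×ˢ (nhdsWithin 0 (Set.Ioi 0)))

def clarkeSubdiff {Y : Type*} [NormedAddCommGroup Y] [NormedSpace ℝ Y]
    (φ : Y → ℝ) (y : Y) : Set (Y →L[ℝ] ℝ) :=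
  {ξ | ∀ z, ξ z ≤ clarkeDeriv φ y z}

/-- The discrete integration operator `(K^k v)_j = k ∑_{i=1}^j v_i + u₀ʰ`. -/
noncomputable def Kk {W : Type*} [AddCommMonoid W] [Module ℝ W]
    (k : ℝ) (u0h : W) (v : ℕ → W) (j : ℕ) : W :=
  k • (∑ i ∈ Finset.Icc 1 j, v i) + u0h

/-- The functional `L(w) = ½⟨Aw,w⟩ + ⟨Bz − g, w⟩ + J(γz, γw)`. -/
noncomputable def Lfun {V X : Type*} [NormedAddCommGroup V] [NormedSpace ℝ V]
    [NormedAddCommGroup X] [NormedSpace ℝ X]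
    (γ : V →L[ℝ] X) (A : V →L[ℝ] V →L[ℝ] ℝ) (B : V → V →L[ℝ] ℝ)
    (J : X → X → ℝ) (z : V) (g : V →L[ℝ] ℝ) (w : V) : ℝ :=
  (1 / 2) * A w w + (B z - g) w + J (γ z) (γ w)

/-- Problem `P_incl^h`: the discrete operator-inclusion problem. -/
def SolIncl {V X : Type*} [NormedAddCommGroup V] [NormedSpace ℝ V]
    [NormedAddCommGroup X] [NormedSpace ℝ X]
    (γ : V →L[ℝ] X) (A : V →L[ℝ] V →L[ℝ] ℝ) (B : V → V →L[ℝ] ℝ)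
    (J : X → X → ℝ) (f : ℝ → V →L[ℝ] ℝ)
    (Vh : Submodule ℝ V) (u0h : Vh) (k : ℝ) (N : ℕ) (v : ℕ → Vh) : Prop :=
  ∀ j ∈ Finset.Icc 1 N,
    ∃ ζ ∈ clarkeSubdiff (J (γ ↑(Kk k u0h v (j - 1)))) (γ ↑(v j)),
      ∀ wh ∈ Vh,
        A ↑(v j) wh + B ↑(Kk k u0h v (j - 1)) wh + ζ (γ wh) = f ((j : ℝ) * k) wh

/-- Problem `P_opt^h`: `0 ∈ ∂(L_j|_{V^h})(v_j)` for `j = 1, …, N`. -/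
def SolOpt {V X : Type*} [NormedAddCommGroup V] [NormedSpace ℝ V]
    [NormedAddCommGroup X] [NormedSpace ℝ X]
    (γ : V →L[ℝ] X) (A : V →L[ℝ] V →L[ℝ] ℝ) (B : V → V →L[ℝ] ℝ)
    (J : X → X → ℝ) (f : ℝ → V →L[ℝ] ℝ)
    (Vh : Submodule ℝ V) (u0h : Vh) (k : ℝ) (N : ℕ) (v : ℕ → Vh) : Prop :=
  ∀ j ∈ Finset.Icc 1 N,
    (0 : Vh →L[ℝ] ℝ) ∈ clarkeSubdiff
      (fun x : Vh => Lfun γ A B J (↑(Kk k u0h v (j - 1))) (f ((j : ℝ) * k)) ↑x) (v j)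

open Topology

section Clarke

variable {Y : Type*} [NormedAddCommGroup Y]

def clarkeFilter (y : Y) : Filter (Y × ℝ) := 𝓝 y ×ˢ 𝓝[>] 0

instance (y : Y) : (clarkeFilter y).NeBot := by
  unfold clarkeFilter; infer_instance

theorem tendsto_fst_clarkeFilter (y : Y) : Tendsto Prod.fst (clarkeFilter y) (𝓝 y) :=
  tendsto_fst

theorem eventually_clarkeFilter_pos (y : Y) : ∀ᶠ p in clarkeFilter y, 0 < p.2 :=
  tendsto_snd.eventually self_mem_nhdsWithin

theorem clarkeFilter_le_nhds (y : Y) : clarkeFilter y ≤ 𝓝 (y, 0) := by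
  rw [nhds_prod_eq]
  exact prod_mono le_rfl nhdsWithin_le_nhds

variable [NormedSpace ℝ Y] {φ : Y → ℝ}

noncomputable def clarkeQuotient (φ : Y → ℝ) (z : Y) (p : Y × ℝ) : ℝ :=
  (φ (p.1 + p.2 • z) - φ p.1) / p.2

theorem clarkeDeriv_def (φ : Y → ℝ) (y z : Y) :
    clarkeDeriv φ y z = limsup (clarkeQuotient φ z) (clarkeFilter y) := rfl

theorem tendsto_clarkeFilter_add_smul (y z : Y) :
    Tendsto (fun p : Y × ℝ => p.1 + p.2 • z) (clarkeFilter y) (𝓝 y) := by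
  have h : Continuous fun p : Y × ℝ => p.1 + p.2 • z := by fun_prop
  simpa using (h.tendsto (y, 0)).mono_left (clarkeFilter_le_nhds y)

theorem LocallyLipschitz.eventually_abs_clarkeQuotient_le (hφ : LocallyLipschitz φ) (y : Y) :
    ∃ K : ℝ, ∀ z, ∀ᶠ p in clarkeFilter y, |clarkeQuotient φ z p| ≤ K * ‖z‖ := by
  obtain ⟨K, t, ht, hK⟩ := hφ y
  refine ⟨K, fun z => ?_⟩
  filter_upwards [(tendsto_fst_clarkeFilter y).eventually ht,
    (tendsto_clarkeFilter_add_smul y z).eventually ht, eventually_clarkeFilter_pos y]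
    with p hp hpz hpos
  have hdist := hK.dist_le_mul _ hpz _ hp
  rw [Real.dist_eq, dist_eq_norm, add_sub_cancel_left, norm_smul, Real.norm_of_nonneg hpos.le]
    at hdist
  rw [clarkeQuotient, abs_div, abs_of_pos hpos, div_le_iff₀ hpos]
  linarith

theorem LocallyLipschitz.clarkeDeriv_le_iff (hφ : LocallyLipschitz φ) {y z : Y} {c : ℝ} :
    clarkeDeriv φ y z ≤ c ↔ ∀ r > c, ∀ᶠ p in clarkeFilter y, clarkeQuotient φ z p < r := by
  obtain ⟨K, hK⟩ := hφ.eventually_abs_clarkeQuotient_le y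
  exact limsup_le_iff
    (isBoundedUnder_of_eventually_ge ((hK z).mono fun _ h => (abs_le.1 h).1)).isCoboundedUnder_le
    (isBoundedUnder_of_eventually_le ((hK z).mono fun _ h => (abs_le.1 h).2))

theorem LocallyLipschitz.eventually_clarkeQuotient_lt (hφ : LocallyLipschitz φ) {y z : Y}
    {r : ℝ} (h : clarkeDeriv φ y z < r) : ∀ᶠ p in clarkeFilter y, clarkeQuotient φ z p < r :=
  hφ.clarkeDeriv_le_iff.1 le_rfl r h

theorem LocallyLipschitz.exists_clarkeDeriv_le_mul_norm (hφ : LocallyLipschitz φ) (y : Y) :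
    ∃ K : ℝ, ∀ z, clarkeDeriv φ y z ≤ K * ‖z‖ := by
  obtain ⟨K, hK⟩ := hφ.eventually_abs_clarkeQuotient_le y
  refine ⟨K, fun z => hφ.clarkeDeriv_le_iff.2 fun r hr => ?_⟩
  filter_upwards [hK z] with p hp
  exact (le_abs_self _).trans hp |>.trans_lt hr

theorem clarkeDeriv_zero_right (φ : Y → ℝ) (y : Y) : clarkeDeriv φ y 0 = 0 := by
  have h : clarkeQuotient φ 0 = fun _ => 0 := by
    funext p
    simp [clarkeQuotient]
  rw [clarkeDeriv_def, h, limsup_const]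

theorem LocallyLipschitz.clarkeDeriv_smul_le (hφ : LocallyLipschitz φ) (y z : Y) {c : ℝ}
    (hc : 0 < c) : clarkeDeriv φ y (c • z) ≤ c * clarkeDeriv φ y z := by
  refine hφ.clarkeDeriv_le_iff.2 fun r hr => ?_
  have hlt : clarkeDeriv φ y z < r / c := by rwa [lt_div_iff₀ hc, mul_comm]
  have hmul : Tendsto (c * ·) (𝓝[>] (0 : ℝ)) (𝓝[>] 0) :=
    tendsto_nhdsWithin_of_tendsto_nhds_of_eventually_within _
      (((continuous_const_mul c).tendsto' 0 0 (mul_zero c)).mono_left nhdsWithin_le_nhds)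
      (eventually_nhdsWithin_of_forall fun t ht => mul_pos hc ht)
  have hscale : Tendsto (fun p : Y × ℝ => (p.1, c * p.2)) (clarkeFilter y) (clarkeFilter y) :=
    tendsto_id.prodMap hmul
  filter_upwards [hscale.eventually (hφ.eventually_clarkeQuotient_lt hlt),
    eventually_clarkeFilter_pos y] with p hp hpos
  have hq : clarkeQuotient φ (c • z) p = c * clarkeQuotient φ z (p.1, c * p.2) := by
    simp only [clarkeQuotient, smul_smul, mul_comm p.2 c]
    field_simp
  rw [hq]
  calc c * clarkeQuotient φ z (p.1, c * p.2) < c * (r / c) := mul_lt_mul_of_pos_left hp hc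
    _ = r := mul_div_cancel₀ r hc.ne'

theorem LocallyLipschitz.clarkeDeriv_smul (hφ : LocallyLipschitz φ) (y z : Y) {c : ℝ}
    (hc : 0 < c) : clarkeDeriv φ y (c • z) = c * clarkeDeriv φ y z := by
  refine le_antisymm (hφ.clarkeDeriv_smul_le y z hc) ?_
  have h := hφ.clarkeDeriv_smul_le y (c • z) (inv_pos.2 hc)
  rw [inv_smul_smul₀ hc.ne'] at h
  rwa [← le_div_iff₀' hc, div_eq_inv_mul]

theorem LocallyLipschitz.clarkeDeriv_add_le (hφ : LocallyLipschitz φ) (y z₁ z₂ : Y) :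
    clarkeDeriv φ y (z₁ + z₂) ≤ clarkeDeriv φ y z₁ + clarkeDeriv φ y z₂ := by
  refine hφ.clarkeDeriv_le_iff.2 fun r hr => ?_
  set ε := (r - (clarkeDeriv φ y z₁ + clarkeDeriv φ y z₂)) / 2 with hε
  have hshift : Tendsto (fun p : Y × ℝ => (p.1 + p.2 • z₂, p.2)) (clarkeFilter y)
      (clarkeFilter y) :=
    (tendsto_clarkeFilter_add_smul y z₂).prodMk tendsto_snd
  filter_upwards [hshift.eventually (hφ.eventually_clarkeQuotient_lt
      (lt_add_of_pos_right (clarkeDeriv φ y z₁) (by positivity : 0 < ε))),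
    hφ.eventually_clarkeQuotient_lt (lt_add_of_pos_right (clarkeDeriv φ y z₂)
      (by positivity : 0 < ε))] with p h₁ h₂
  have hq : clarkeQuotient φ (z₁ + z₂) p =
      clarkeQuotient φ z₁ (p.1 + p.2 • z₂, p.2) + clarkeQuotient φ z₂ p := by
    simp only [clarkeQuotient, smul_add, add_comm (p.2 • z₁), ← add_assoc]
    ring
  linarith

end Clarke

section ClarkeCalculus

variable {Y : Type*} [NormedAddCommGroup Y] [NormedSpace ℝ Y] {φ : Y → ℝ}

/-- Hahn–Banach applied to the sublinear functional `z ↦ φ⁰(y; z)`. -/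
theorem LocallyLipschitz.clarkeSubdiff_nonempty (hφ : LocallyLipschitz φ) (y : Y) :
    (clarkeSubdiff φ y).Nonempty := by
  obtain ⟨K, hK⟩ := hφ.exists_clarkeDeriv_le_mul_norm y
  have hzero : ∀ x : (LinearMap.toPMap (0 : Y →ₗ[ℝ] ℝ) ⊥).domain,
      (LinearMap.toPMap (0 : Y →ₗ[ℝ] ℝ) ⊥) x ≤ clarkeDeriv φ y x := by
    rintro ⟨x, hx⟩
    obtain rfl : x = 0 := by simpa using hx
    simp [clarkeDeriv_zero_right]
  obtain ⟨ξ, -, hξ⟩ := exists_extension_of_le_sublinear _ (clarkeDeriv φ y)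
    (fun c hc z => hφ.clarkeDeriv_smul y z hc) (hφ.clarkeDeriv_add_le y) hzero
  have hbound : ∀ x, ‖ξ x‖ ≤ K * ‖x‖ := fun x => by
    rw [Real.norm_eq_abs, abs_le]
    refine ⟨?_, (hξ x).trans (hK x)⟩
    have := (hξ (-x)).trans (hK (-x))
    rw [map_neg, norm_neg] at this
    linarith
  exact ⟨ξ.mkContinuous K hbound, hξ⟩

theorem LocallyLipschitz.zero_mem_clarkeSubdiff_of_forall_le (hφ : LocallyLipschitz φ) {y : Y}
    (hmin : ∀ w, φ y ≤ φ w) : (0 : Y →L[ℝ] ℝ) ∈ clarkeSubdiff φ y := by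
  intro z
  rw [zero_apply]
  by_contra! hneg
  have hslice : ∀ᶠ t in 𝓝[>] (0 : ℝ), clarkeQuotient φ z (y, t) < 0 :=
    (tendsto_const_nhds.prodMk tendsto_id).eventually (hφ.eventually_clarkeQuotient_lt hneg)
  obtain ⟨t, ht, htpos⟩ := (hslice.and self_mem_nhdsWithin).exists
  exact (div_nonneg (sub_nonneg.2 (hmin _)) (le_of_lt htpos)).not_gt ht

theorem LocallyLipschitz.clarkeDeriv_comp_le {X : Type*} [NormedAddCommGroup X]
    [NormedSpace ℝ X] {ψ : X → ℝ} (hψ : LocallyLipschitz ψ) (T : Y →L[ℝ] X) (y d : Y) :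
    clarkeDeriv (fun w => ψ (T w)) y d ≤ clarkeDeriv ψ (T y) (T d) := by
  have hφ : LocallyLipschitz fun w => ψ (T w) := hψ.comp T.lipschitz.locallyLipschitz
  have hT : Tendsto (fun p : Y × ℝ => (T p.1, p.2)) (clarkeFilter y) (clarkeFilter (T y)) :=
    (T.continuous.tendsto y).prodMap tendsto_id
  refine hφ.clarkeDeriv_le_iff.2 fun r hr => ?_
  filter_upwards [hT.eventually (hψ.eventually_clarkeQuotient_lt hr)] with p hp
  simpa [clarkeQuotient] using hp

theorem HasStrictFDerivAt.tendsto_clarkeQuotient {f' : Y →L[ℝ] ℝ} {y : Y}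
    (hf : HasStrictFDerivAt φ f' y) (d : Y) :
    Tendsto (clarkeQuotient φ d) (clarkeFilter y) (𝓝 (f' d)) := by
  have hpair : Tendsto (fun p : Y × ℝ => (p.1 + p.2 • d, p.1)) (clarkeFilter y) (𝓝 (y, y)) :=
    (tendsto_clarkeFilter_add_smul y d).prodMk_nhds (tendsto_fst_clarkeFilter y)
  have hsmall : (fun p : Y × ℝ => φ (p.1 + p.2 • d) - φ p.1 - p.2 * f' d) =o[clarkeFilter y]
      fun p => p.2 := by
    refine (hf.isLittleO.comp_tendsto hpair).congr_left (fun p => by simp)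
      |>.trans_isBigO (Asymptotics.IsBigO.of_bound ‖d‖ (Eventually.of_forall fun p => ?_))
    simp [norm_smul, mul_comm]
  have hlim := hsmall.tendsto_div_nhds_zero.add_const (f' d)
  rw [zero_add] at hlim
  refine hlim.congr' ?_
  filter_upwards [eventually_clarkeFilter_pos y] with p hp
  simp only [clarkeQuotient]
  field_simp
  ring

theorem HasStrictFDerivAt.clarkeDeriv_add_le {f' : Y →L[ℝ] ℝ} {ψ : Y → ℝ} {y : Y}
    (hf : HasStrictFDerivAt φ f' y) (hφ : LocallyLipschitz φ) (hψ : LocallyLipschitz ψ)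
    (d : Y) : clarkeDeriv (fun w => φ w + ψ w) y d ≤ f' d + clarkeDeriv ψ y d := by
  refine (hφ.add hψ).clarkeDeriv_le_iff.2 fun r hr => ?_
  set ε := (r - (f' d + clarkeDeriv ψ y d)) / 2 with hε
  have hεpos : 0 < ε := by linarith
  filter_upwards
    [(hf.tendsto_clarkeQuotient d).eventually (gt_mem_nhds (lt_add_of_pos_right _ hεpos)),
    hψ.eventually_clarkeQuotient_lt (lt_add_of_pos_right _ hεpos)] with p h₁ h₂
  have hq : clarkeQuotient (fun w => φ w + ψ w) d p =
      clarkeQuotient φ d p + clarkeQuotient ψ d p := by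
    simp only [clarkeQuotient]
    ring
  linarith

end ClarkeCalculus

section RelaxedMonotone

variable {Y : Type*} [NormedAddCommGroup Y] [NormedSpace ℝ Y] {φ : Y → ℝ} {m : ℝ}

/-- The upper right Dini derivative of `t ↦ φ (x + t • d)` is at most `φ⁰(x + t • d; d)`. -/
theorem LocallyLipschitz.sub_le_of_clarkeDeriv_le (hφ : LocallyLipschitz φ) (x d : Y) {M : ℝ}
    (hM : ∀ t ∈ Ico (0 : ℝ) 1, clarkeDeriv φ (x + t • d) d ≤ M) : φ (x + d) - φ x ≤ M := by
  set g : ℝ → ℝ := fun t => φ (x + t • d)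
  have hg : Continuous g := hφ.continuous.comp (by fun_prop)
  have key := image_le_of_liminf_slope_right_le_deriv_boundary (a := 0) (b := 1)
    (B := fun t => g 0 + M * t) (B' := fun _ => M) hg.continuousOn (by simp) (by fun_prop)
    (fun t _ => ((hasDerivAt_id t).const_mul M).hasDerivWithinAt.const_add (g 0) |>.congr_deriv
      (mul_one M))
    (fun t ht r hr => ?_) (right_mem_Icc.2 zero_le_one)
  · have key' : φ (x + d) ≤ φ x + M := by simpa [g] using key
    linarith
  have hshift : Tendsto (fun s => s - t) (𝓝[>] t) (𝓝[>] 0) :=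
    tendsto_nhdsWithin_of_tendsto_nhds_of_eventually_within _
      (((continuous_sub_right t).tendsto' t 0 (sub_self t)).mono_left nhdsWithin_le_nhds)
      (eventually_nhdsWithin_of_forall fun s hs => mem_Ioi.2 (sub_pos.2 hs))
  have hslice := (tendsto_const_nhds.prodMk hshift).eventually
    (hφ.eventually_clarkeQuotient_lt ((hM t ht).trans_lt hr))
  refine Eventually.frequently ?_
  filter_upwards [hslice] with s hs
  rw [clarkeQuotient, add_assoc, ← add_smul, add_sub_cancel] at hs
  rwa [slope_def_field]

def ClarkeRelaxedMonotone (φ : Y → ℝ) (m : ℝ) : Prop :=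
  ∀ v₁ v₂, clarkeDeriv φ v₁ (v₂ - v₁) + clarkeDeriv φ v₂ (v₁ - v₂) ≤ m * ‖v₁ - v₂‖ ^ 2

theorem ClarkeRelaxedMonotone.le_apply (hrm : ClarkeRelaxedMonotone φ m) (hm : 0 ≤ m)
    (hφ : LocallyLipschitz φ) {x : Y} {ξ : Y →L[ℝ] ℝ} (hξ : ξ ∈ clarkeSubdiff φ x) (u : Y) :
    φ x + ξ (u - x) - m * ‖u - x‖ ^ 2 ≤ φ u := by
  set e := u - x
  have hx : u + -e = x := by simp [e]
  have hmv := hφ.sub_le_of_clarkeDeriv_le u (-e) (M := m * ‖e‖ ^ 2 - ξ e) fun t ht => ?_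
  · rw [hx] at hmv
    linarith
  have hpt : u + t • -e = x + (1 - t) • e := by
    simp only [e, smul_neg, sub_smul, one_smul]
    abel
  rw [hpt]
  set s := 1 - t
  have hs : 0 < s := by linarith [ht.2]
  have hs1 : s ≤ 1 := by linarith [ht.1]
  have h := hrm (x + s • e) x
  rw [show x - (x + s • e) = s • -e by simp, add_sub_cancel_left, hφ.clarkeDeriv_smul _ _ hs,
    norm_smul, Real.norm_of_nonneg hs.le] at h
  have hξs := hξ (s • e)
  rw [map_smul, smul_eq_mul] at hξs
  refine le_of_mul_le_mul_left ?_ hs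
  nlinarith [mul_nonneg (mul_nonneg hm (sq_nonneg ‖e‖)) (mul_nonneg hs.le (sub_nonneg.2 hs1))]

end RelaxedMonotone

theorem exists_forall_le_of_quadratic_lower_bound {E : Type*} [NormedAddCommGroup E]
    [ProperSpace E] {f : E → ℝ} (hf : Continuous f) {α β c : ℝ} (hα : 0 < α)
    (hlow : ∀ x, α * ‖x‖ ^ 2 - β * ‖x‖ + c ≤ f x) : ∃ x, ∀ y, f x ≤ f y := by
  have hpoly : Tendsto (fun t : ℝ => α * t ^ 2 - β * t + c) atTop atTop := by
    have h := (tendsto_id.atTop_mul_atTop₀ ((tendsto_id.const_mul_atTop hα).atTop_add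
      (tendsto_const_nhds (x := -β)))).atTop_add (tendsto_const_nhds (x := c))
    refine h.congr fun t => ?_
    simp only [id]
    ring
  exact hf.exists_forall_le (tendsto_atTop_mono hlow (hpoly.comp tendsto_norm_cocompact_atTop))

section Functional

variable {V X : Type*} [NormedAddCommGroup V] [NormedSpace ℝ V] [NormedAddCommGroup X]
  [NormedSpace ℝ X] {γ : V →L[ℝ] X} {A : V →L[ℝ] V →L[ℝ] ℝ} {B : V → V →L[ℝ] ℝ} {J : X → X → ℝ}
  {z : V} {g : V →L[ℝ] ℝ}

theorem hasStrictFDerivAt_half_quadratic_add (A : V →L[ℝ] V →L[ℝ] ℝ) (ℓ : V →L[ℝ] ℝ) (u : V) :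
    HasStrictFDerivAt (fun w => 1 / 2 * A w w + ℓ w) ((1 / 2 : ℝ) • (A u + A.flip u) + ℓ) u := by
  have h : HasStrictFDerivAt (fun w => 1 / 2 * A w w + ℓ w) _ u :=
    ((A.hasStrictFDerivAt_of_bilinear (hasStrictFDerivAt_id u)
      (hasStrictFDerivAt_id u)).const_mul (1 / 2)).add ℓ.hasStrictFDerivAt
  exact h.congr_fderiv (by ext d; simp)

theorem locallyLipschitz_Lfun (hψ : LocallyLipschitz (J (γ z))) :
    LocallyLipschitz (Lfun γ A B J z g) := by
  have hsmooth : ContDiff ℝ 1 fun w => 1 / 2 * A w w + (B z - g) w := by fun_prop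
  exact hsmooth.locallyLipschitz.add (hψ.comp γ.lipschitz.locallyLipschitz)

theorem clarkeDeriv_Lfun_le (hψ : LocallyLipschitz (J (γ z))) (u d : V) :
    clarkeDeriv (Lfun γ A B J z g) u d ≤
      (A u d + A d u) / 2 + (B z - g) d + clarkeDeriv (J (γ z)) (γ u) (γ d) := by
  have hsmooth : ContDiff ℝ 1 fun w => 1 / 2 * A w w + (B z - g) w := by fun_prop
  have hψγ : LocallyLipschitz fun w => J (γ z) (γ w) := hψ.comp γ.lipschitz.locallyLipschitz
  have h := (hasStrictFDerivAt_half_quadratic_add A (B z - g) u).clarkeDeriv_add_le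
    hsmooth.locallyLipschitz hψγ d
  have hγ := hψ.clarkeDeriv_comp_le γ u d
  simp only [add_apply, smul_apply,
    ContinuousLinearMap.flip_apply, smul_eq_mul] at h
  change clarkeDeriv (fun w => (1 / 2 * A w w + (B z - g) w) + J (γ z) (γ w)) u d ≤ _
  linarith

theorem Lfun_lower_bound {mA mJ1 : ℝ} (hAco : ∀ u : V, mA * ‖u‖ ^ 2 ≤ A u u)
    (hψ : LocallyLipschitz (J (γ z))) (hrm : ClarkeRelaxedMonotone (J (γ z)) mJ1)
    (hm : 0 ≤ mJ1) :
    ∃ β c : ℝ, ∀ u, (mA / 2 - mJ1 * ‖γ‖ ^ 2) * ‖u‖ ^ 2 - β * ‖u‖ + c ≤ Lfun γ A B J z g u := by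
  obtain ⟨ξ, hξ⟩ := hψ.clarkeSubdiff_nonempty 0
  refine ⟨‖B z - g‖ + ‖ξ‖ * ‖γ‖, J (γ z) 0, fun u => ?_⟩
  have hJ := hrm.le_apply hm hψ hξ (γ u)
  rw [sub_zero] at hJ
  have hγu : ‖γ u‖ ≤ ‖γ‖ * ‖u‖ := γ.le_opNorm u
  have hξu : -(‖ξ‖ * (‖γ‖ * ‖u‖)) ≤ ξ (γ u) := by
    have := (neg_abs_le _).trans' (neg_le_neg (ξ.le_opNorm (γ u)))
    nlinarith [norm_nonneg ξ]
  have hℓu : -(‖B z - g‖ * ‖u‖) ≤ (B z - g) u :=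
    (neg_le_neg ((B z - g).le_opNorm u)).trans (neg_abs_le _)
  have hsq : ‖γ u‖ ^ 2 ≤ ‖γ‖ ^ 2 * ‖u‖ ^ 2 := by
    rw [← mul_pow]
    exact pow_le_pow_left₀ (norm_nonneg _) hγu 2
  unfold Lfun
  nlinarith [hAco u, mul_le_mul_of_nonneg_left hsq hm]

theorem eq_of_clarkeDeriv_Lfun_nonneg {mA mJ1 : ℝ} (hAco : ∀ u : V, mA * ‖u‖ ^ 2 ≤ A u u)
    (hψ : LocallyLipschitz (J (γ z))) (hrm : ClarkeRelaxedMonotone (J (γ z)) mJ1)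
    (hm : 0 ≤ mJ1) (hcoer : 0 < mA - mJ1 * ‖γ‖ ^ 2) {u u' : V}
    (h : 0 ≤ clarkeDeriv (Lfun γ A B J z g) u (u' - u))
    (h' : 0 ≤ clarkeDeriv (Lfun γ A B J z g) u' (u - u')) : u = u' := by
  have h₁ := h.trans (clarkeDeriv_Lfun_le hψ u (u' - u))
  have h₂ := h'.trans (clarkeDeriv_Lfun_le hψ u' (u - u'))
  have hJ := hrm (γ u) (γ u')
  have hA := hAco (u - u')
  have hsq : ‖γ u - γ u'‖ ^ 2 ≤ ‖γ‖ ^ 2 * ‖u - u'‖ ^ 2 := by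
    rw [← map_sub, ← mul_pow]
    exact pow_le_pow_left₀ (norm_nonneg _) (γ.le_opNorm _) 2
  simp only [map_sub, sub_apply] at h₁ h₂ hA
  have hnonpos : (mA - mJ1 * ‖γ‖ ^ 2) * ‖u - u'‖ ^ 2 ≤ 0 := by
    nlinarith [mul_le_mul_of_nonneg_left hsq hm]
  have hzero : ‖u - u'‖ ^ 2 = 0 :=
    le_antisymm (nonpos_of_mul_nonpos_right hnonpos hcoer) (sq_nonneg _)
  rwa [sq_eq_zero_iff, norm_eq_zero, sub_eq_zero] at hzero

variable (Vh : Submodule ℝ V) {mA mJ1 : ℝ}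

theorem exists_forall_Lfun_le [FiniteDimensional ℝ Vh] (hAco : ∀ u : V, mA * ‖u‖ ^ 2 ≤ A u u)
    (hψ : LocallyLipschitz (J (γ z))) (hrm : ClarkeRelaxedMonotone (J (γ z)) mJ1)
    (hm : 0 ≤ mJ1) (hcoer : 0 < mA - 2 * mJ1 * ‖γ‖ ^ 2) :
    ∃ x : Vh, ∀ w : Vh, Lfun γ A B J z g x ≤ Lfun γ A B J z g w := by
  obtain ⟨β, c, hlow⟩ := Lfun_lower_bound (B := B) (g := g) hAco hψ hrm hm
  exact exists_forall_le_of_quadratic_lower_bound (α := mA / 2 - mJ1 * ‖γ‖ ^ 2)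
    ((locallyLipschitz_Lfun hψ).continuous.comp continuous_subtype_val) (by linarith)
    fun x => by simpa using hlow x

theorem eq_of_zero_mem_clarkeSubdiff_Lfun (hAco : ∀ u : V, mA * ‖u‖ ^ 2 ≤ A u u)
    (hψ : LocallyLipschitz (J (γ z))) (hrm : ClarkeRelaxedMonotone (J (γ z)) mJ1)
    (hm : 0 ≤ mJ1) (hcoer : 0 < mA - mJ1 * ‖γ‖ ^ 2) {x x' : Vh}
    (h : (0 : Vh →L[ℝ] ℝ) ∈ clarkeSubdiff (fun w : Vh => Lfun γ A B J z g w) x)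
    (h' : (0 : Vh →L[ℝ] ℝ) ∈ clarkeSubdiff (fun w : Vh => Lfun γ A B J z g w) x') : x = x' := by
  have hrestrict : ∀ y d : Vh, 0 ∈ clarkeSubdiff (fun w : Vh => Lfun γ A B J z g w) y →
      0 ≤ clarkeDeriv (Lfun γ A B J z g) y d := fun y d hy =>
    (hy d).trans ((locallyLipschitz_Lfun hψ).clarkeDeriv_comp_le Vh.subtypeL y d)
  exact Subtype.ext <| eq_of_clarkeDeriv_Lfun_nonneg hAco hψ hrm hm hcoer
    (by simpa using hrestrict x (x' - x) h) (by simpa using hrestrict x' (x - x') h')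

end Functional

theorem Kk_congr {W : Type*} [AddCommMonoid W] [Module ℝ W] (k : ℝ) (u0h : W) {v v' : ℕ → W}
    {j : ℕ} (h : ∀ i ∈ Finset.Icc 1 j, v i = v' i) : Kk k u0h v j = Kk k u0h v' j := by
  rw [Kk, Kk, Finset.sum_congr rfl h]

section DiscreteProblem

variable {V X : Type*} [NormedAddCommGroup V] [NormedSpace ℝ V] [NormedAddCommGroup X]
  [NormedSpace ℝ X] {γ : V →L[ℝ] X} {A : V →L[ℝ] V →L[ℝ] ℝ} {B : V → V →L[ℝ] ℝ} {J : X → X → ℝ}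
  {f : ℝ → V →L[ℝ] ℝ} {Vh : Submodule ℝ V} {u0h : Vh} {k : ℝ}

theorem exists_solOpt (hex : ∀ (y : V) (g : V →L[ℝ] ℝ), ∃ x : Vh,
      (0 : Vh →L[ℝ] ℝ) ∈ clarkeSubdiff (fun w : Vh => Lfun γ A B J y g w) x) (N : ℕ) :
    ∃ v, SolOpt γ A B J f Vh u0h k N v := by
  induction N with
  | zero => exact ⟨0, by simp [SolOpt]⟩
  | succ n ih =>
    obtain ⟨v, hv⟩ := ih
    obtain ⟨x, hx⟩ := hex ↑(Kk k u0h v n) (f ((n + 1 : ℕ) * k))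
    refine ⟨Function.update v (n + 1) x, fun j hj => ?_⟩
    rw [Finset.mem_Icc] at hj
    have hK : Kk k u0h (Function.update v (n + 1) x) (j - 1) = Kk k u0h v (j - 1) :=
      Kk_congr k u0h fun i hi => Function.update_of_ne (by simp at hi; omega) _ _
    rw [hK]
    rcases Nat.lt_or_ge j (n + 1) with hlt | hge
    · rw [Function.update_of_ne hlt.ne]
      exact hv j (Finset.mem_Icc.2 ⟨hj.1, by omega⟩)
    · obtain rfl : j = n + 1 := by omega
      rwa [Function.update_self]

theorem SolOpt.unique (huniq : ∀ (y : V) (g : V →L[ℝ] ℝ) (x x' : Vh),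
      (0 : Vh →L[ℝ] ℝ) ∈ clarkeSubdiff (fun w : Vh => Lfun γ A B J y g w) x →
      (0 : Vh →L[ℝ] ℝ) ∈ clarkeSubdiff (fun w : Vh => Lfun γ A B J y g w) x' → x = x')
    {N : ℕ} {v v' : ℕ → Vh} (hv : SolOpt γ A B J f Vh u0h k N v)
    (hv' : SolOpt γ A B J f Vh u0h k N v') : ∀ j ∈ Finset.Icc 1 N, v j = v' j := by
  intro j
  induction j using Nat.strong_induction_on with
  | _ j ih =>
    intro hj
    have hK : Kk k u0h v (j - 1) = Kk k u0h v' (j - 1) := Kk_congr k u0h fun i hi => by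
      rw [Finset.mem_Icc] at hi hj
      exact ih i (by omega) (Finset.mem_Icc.2 ⟨hi.1, by omega⟩)
    have h' := hv' j hj
    rw [← hK] at h'
    exact huniq _ _ _ _ (hv j hj) h'

end DiscreteProblem

theorem unique_minimizer_Popt_general
    {V X : Type*}
    [NormedAddCommGroup V] [NormedSpace ℝ V]
    [NormedAddCommGroup X] [NormedSpace ℝ X]
    (γ : V →L[ℝ] X)
    -- H(A)
    (A : V →L[ℝ] V →L[ℝ] ℝ)
    (mA : ℝ)
    (hAco : ∀ u : V, mA * ‖u‖ ^ 2 ≤ A u u)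
    -- H(B)
    (B : V → V →L[ℝ] ℝ)
    -- H(J)
    (J : X → X → ℝ)
    (hJa : ∀ w : X, LocallyLipschitz (J w))
    (mJ1 mJ2 : ℝ) (hmJ1 : 0 ≤ mJ1)
    (hJc : ∀ w₁ w₂ v₁ v₂ : X,
      clarkeDeriv (J w₁) v₁ (v₂ - v₁) + clarkeDeriv (J w₂) v₂ (v₁ - v₂) ≤
        mJ1 * ‖v₁ - v₂‖ ^ 2 + mJ2 * ‖w₁ - w₂‖ * ‖v₁ - v₂‖)
    -- H(f)
    (T : ℝ)
    (f : ℝ → V →L[ℝ] ℝ)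
    -- (H_s)
    (hs : 0 < mA - 2 * mJ1 * ‖γ‖ ^ 2)
    -- discretization
    (Vh : Submodule ℝ V) [FiniteDimensional ℝ Vh] (u0h : Vh)
    (z : V) (g : V →L[ℝ] ℝ) :
    (∃! vh : Vh, ∀ wh : Vh, Lfun γ A B J z g ↑vh ≤ Lfun γ A B J z g ↑wh) ∧
    (∃! vh : Vh, (0 : Vh →L[ℝ] ℝ) ∈
      clarkeSubdiff (fun x : Vh => Lfun γ A B J z g ↑x) vh) ∧
    (∀ (N : ℕ), 1 ≤ N →
      (∃ v : ℕ → Vh, SolOpt γ A B J f Vh u0h (T / N) N v) ∧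
      (∀ v v' : ℕ → Vh, SolOpt γ A B J f Vh u0h (T / N) N v →
        SolOpt γ A B J f Vh u0h (T / N) N v' → ∀ j ∈ Finset.Icc 1 N, v j = v' j)) := by
  have hrm (w : X) : ClarkeRelaxedMonotone (J w) mJ1 := fun v₁ v₂ => by
    simpa only [sub_self, norm_zero, mul_zero, zero_mul, add_zero] using hJc w w v₁ v₂
  have hcoer : 0 < mA - mJ1 * ‖γ‖ ^ 2 := by nlinarith [mul_nonneg hmJ1 (sq_nonneg ‖γ‖)]
  have hmin (y : V) (g' : V →L[ℝ] ℝ) :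
      ∃ x : Vh, ∀ w : Vh, Lfun γ A B J y g' x ≤ Lfun γ A B J y g' w :=
    exists_forall_Lfun_le Vh hAco (hJa _) (hrm _) hmJ1 hs
  have hcrit (y : V) (g' : V →L[ℝ] ℝ) (x : Vh)
      (hx : ∀ w : Vh, Lfun γ A B J y g' x ≤ Lfun γ A B J y g' w) :
      (0 : Vh →L[ℝ] ℝ) ∈ clarkeSubdiff (fun w : Vh => Lfun γ A B J y g' w) x :=
    ((locallyLipschitz_Lfun (hJa _)).comp Vh.subtypeL.lipschitz.locallyLipschitz)
      |>.zero_mem_clarkeSubdiff_of_forall_le hx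
  have huniq (y : V) (g' : V →L[ℝ] ℝ) (x x' : Vh) :=
    eq_of_zero_mem_clarkeSubdiff_Lfun (B := B) (z := y) (g := g') Vh hAco (hJa _) (hrm _) hmJ1
      hcoer (x := x) (x' := x')
  obtain ⟨x, hx⟩ := hmin z g
  refine ⟨⟨x, hx, fun x' hx' => huniq _ _ _ _ (hcrit _ _ _ hx') (hcrit _ _ _ hx)⟩,
    ⟨x, hcrit _ _ _ hx, fun x' hx' => huniq _ _ _ _ hx' (hcrit _ _ _ hx)⟩,
    fun N _ => ⟨exists_solOpt (fun y g' => (hmin y g').imp (hcrit y g')) N,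
      fun v v' => SolOpt.unique huniq⟩⟩

/-- `L` attains a unique global minimizer over `V^h`; equivalently there is
exactly one `v^h ∈ V^h` with `0 ∈ ∂(L|_{V^h})(v^h)`. Consequently, Problem `P_opt^h` has a
unique solution. -/
theorem unique_minimizer_Popt
    {V X : Type*}
    [NormedAddCommGroup V] [NormedSpace ℝ V] [CompleteSpace V]
    [NormedAddCommGroup X] [NormedSpace ℝ X] [CompleteSpace X]
    -- V reflexive
    (hrefl : Function.Surjective (NormedSpace.inclusionInDoubleDual ℝ V))
    (γ : V →L[ℝ] X)
    -- H(A)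
    (A : V →L[ℝ] V →L[ℝ] ℝ)
    (hAsym : ∀ u v : V, A u v = A v u)
    (mA : ℝ) (hmA : 0 < mA)
    (hAco : ∀ u : V, mA * ‖u‖ ^ 2 ≤ A u u)
    -- H(B)
    (B : V → V →L[ℝ] ℝ)
    (LB : ℝ) (hLB : 0 < LB)
    (hB : ∀ v w : V, ‖B v - B w‖ ≤ LB * ‖v - w‖)
    -- H(J)
    (J : X → X → ℝ)
    (hJa : ∀ w : X, LocallyLipschitz (J w))
    (c₀ c₁ c₂ : ℝ) (hc₀ : 0 ≤ c₀) (hc₁ : 0 ≤ c₁) (hc₂ : 0 ≤ c₂)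
    (hJb : ∀ w v : X, ∀ ξ ∈ clarkeSubdiff (J w) v, ‖ξ‖ ≤ c₀ + c₁ * ‖w‖ + c₂ * ‖v‖)
    (mJ1 mJ2 : ℝ) (hmJ1 : 0 ≤ mJ1) (hmJ2 : 0 ≤ mJ2)
    (hJc : ∀ w₁ w₂ v₁ v₂ : X,
      clarkeDeriv (J w₁) v₁ (v₂ - v₁) + clarkeDeriv (J w₂) v₂ (v₁ - v₂) ≤
        mJ1 * ‖v₁ - v₂‖ ^ 2 + mJ2 * ‖w₁ - w₂‖ * ‖v₁ - v₂‖)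
    -- H(f)
    (T : ℝ) (hT : 0 < T)
    (f : ℝ → V →L[ℝ] ℝ) (hf : ContinuousOn f (Set.Icc 0 T))
    -- H(u₀)
    (u₀ : V)
    -- (H_s)
    (hs : 0 < mA - 2 * mJ1 * ‖γ‖ ^ 2)
    -- discretization
    (Vh : Submodule ℝ V) [FiniteDimensional ℝ Vh] (u0h : Vh)
    (z : V) (g : V →L[ℝ] ℝ) :
    (∃! vh : Vh, ∀ wh : Vh, Lfun γ A B J z g ↑vh ≤ Lfun γ A B J z g ↑wh) ∧
    (∃! vh : Vh, (0 : Vh →L[ℝ] ℝ) ∈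
      clarkeSubdiff (fun x : Vh => Lfun γ A B J z g ↑x) vh) ∧
    (∀ (N : ℕ), 1 ≤ N →
      (∃ v : ℕ → Vh, SolOpt γ A B J f Vh u0h (T / N) N v) ∧
      (∀ v v' : ℕ → Vh, SolOpt γ A B J f Vh u0h (T / N) N v →
        SolOpt γ A B J f Vh u0h (T / N) N v' → ∀ j ∈ Finset.Icc 1 N, v j = v' j)) :=
  unique_minimizer_Popt_general γ A mA hAco B J hJa mJ1 mJ2 hmJ1 hJc T f hs Vh u0h z g
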